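/- arXiv:1603.00113 — 5 statements merged into one kernel-verified Lean document; each statement's English description precedes it below -/
import Mathlib

section
/- Theorem 1: Let u = (u_0,…,u_c) have all components strictly positive, and let ν ∈ ℕ₀^c satisfy ν_1 + ⋯ + ν_c = n. Then the energy function V(·,u) is strictly convex on the convex set 𝒮(ν), the gradient equation ∇_x V(x,u) = 0 has exactly one solution x_ss in 𝒮(ν), and at this solution the Hessian matrix of V(·,u) is positive definite (so x_ss is a stable equilibrium of the gradient flow ẋ = −∇_x V(x,u)). -/
open Finset Filter Topology

/-- The normalized energy function `V(x,u)` of `n` charged particles at positions `x` with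
`c+1` electrodes at positions `q` carrying charges `u`. -/
noncomputable def energy (n c : ℕ) (q u : Fin (c + 1) → ℝ) (x : Fin n → ℝ) : ℝ :=
  (1 / 2) * ∑ i : Fin n, ∑ j ∈ Finset.univ \ {i}, 1 / |x i - x j| +
    ∑ i : Fin n, ∑ j : Fin (c + 1), u j / |x i - q j|

/-- The simplified state space `𝒮₀ = {x : q₀ < x₁ < ⋯ < xₙ < q_c}`. -/
def stateSpace (n c : ℕ) (q : Fin (c + 1) → ℝ) : Set (Fin n → ℝ) :=
  {x | (∀ i j : Fin n, i < j → x i < x j) ∧ ∀ i, q 0 < x i ∧ x i < q (Fin.last c)}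

/-- The region of attraction `𝒮(ν)`: the subset of `𝒮₀` where, for each `k`, the consecutive
coordinates with indices in `[ν₁+⋯+ν_{k-1}, ν₁+⋯+ν_k)` lie strictly between `q_{k-1}` and `q_k`. -/
def roa (n c : ℕ) (q : Fin (c + 1) → ℝ) (ν : Fin c → ℕ) : Set (Fin n → ℝ) :=
  {x | x ∈ stateSpace n c q ∧ ∀ k : Fin c, ∀ m : Fin n,
    (∑ j ∈ Finset.Iio k, ν j) ≤ (m : ℕ) → (m : ℕ) < (∑ j ∈ Finset.Iio k, ν j) + ν k →
    q k.castSucc < x m ∧ x m < q k.succ}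

/-- The set of points whose coordinates are pairwise distinct and distinct from all
electrode positions. -/
def goodSet (n c : ℕ) (q : Fin (c + 1) → ℝ) : Set (Fin n → ℝ) :=
  {x | (∀ i j : Fin n, i ≠ j → x i ≠ x j) ∧ ∀ (i : Fin n) (j : Fin (c + 1)), x i ≠ q j}

/-- The Hessian matrix of `V(·,u)` at `x`. -/
noncomputable def hessian (n c : ℕ) (q u : Fin (c + 1) → ℝ) (x : Fin n → ℝ) :
    Matrix (Fin n) (Fin n) ℝ :=
  fun k i => iteratedFDeriv ℝ 2 (energy n c q u) x ![Pi.single k 1, Pi.single i 1]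

/-!
Away from collisions `V(·,u)` is smooth, and its Hessian is the quadratic form
`v ↦ ∑_{i ≠ j} (v_i - v_j)² / |x_i - x_j|³ + ∑_{i,j} 2 u_j v_i² / |x_i - q_j|³`,
which is positive definite as soon as every `u_j > 0` (the electrode terms alone are).
The region `𝒮(ν)` is open, convex and collision free, so `V` is strictly convex on it.
Since `V` blows up when two particles, or a particle and an electrode, collide, the part of
`𝒮(ν)` where `V` stays below a given level lies in a compact subset of `𝒮(ν)`; hence `V` attains
its minimum on `𝒮(ν)`, at a critical point. Conversely, a critical point of a convex function is a
minimizer, and a strictly convex function has at most one minimizer.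
-/

section Calculus
variable {E : Type*} [NormedAddCommGroup E] [NormedSpace ℝ E] {g : E → ℝ} {g' : E →L[ℝ] ℝ} {x : E}

theorem hasDerivAt_div_abs (a : ℝ) {t : ℝ} (ht : t ≠ 0) :
    HasDerivAt (fun s => a / |s|) (-(a * t / |t| ^ 3)) t := by
  refine ((hasDerivAt_const t a).fun_div (hasDerivAt_abs ht) (abs_ne_zero.2 ht)).congr_deriv ?_
  have : |t| ≠ 0 := abs_ne_zero.2 ht
  field_simp
  linear_combination (-a) * abs_mul_sign t

theorem hasDerivAt_neg_mul_div_abs_pow_three (a : ℝ) {t : ℝ} (ht : t ≠ 0) :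
    HasDerivAt (fun s => -(a * s / |s| ^ 3)) (2 * a / |t| ^ 3) t := by
  refine ((((hasDerivAt_id' t).const_mul a).fun_div ((hasDerivAt_abs ht).fun_pow 3)
      (pow_ne_zero 3 (abs_ne_zero.2 ht))).fun_neg).congr_deriv ?_
  have : |t| ≠ 0 := abs_ne_zero.2 ht
  field_simp
  norm_num
  linear_combination (3 * a * t ^ 2) * sign_mul_self t - (3 * a * |t|) * sq_abs t

theorem HasFDerivAt.div_abs (hg : HasFDerivAt g g' x) (hx : g x ≠ 0) (a : ℝ) :
    HasFDerivAt (fun y => a / |g y|) ((-(a * g x / |g x| ^ 3)) • g') x :=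
  (hasDerivAt_div_abs a hx).comp_hasFDerivAt x hg

theorem HasFDerivAt.neg_mul_div_abs_pow_three (hg : HasFDerivAt g g' x) (hx : g x ≠ 0) (a : ℝ) :
    HasFDerivAt (fun y => -(a * g y / |g y| ^ 3)) ((2 * a / |g x| ^ 3) • g') x :=
  (hasDerivAt_neg_mul_div_abs_pow_three a hx).comp_hasFDerivAt x hg

end Calculus

section Convexity
variable {E : Type*} [NormedAddCommGroup E] [NormedSpace ℝ E] {s : Set E} {f : E → ℝ} {x : E}

theorem strictConvexOn_of_hasFDerivAt2_pos {f' : E → E →L[ℝ] ℝ} {f'' : E → E →L[ℝ] E →L[ℝ] ℝ}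
    (hs : Convex ℝ s) (hf : ∀ x ∈ s, HasFDerivAt f (f' x) x)
    (hf' : ∀ x ∈ s, HasFDerivAt f' (f'' x) x) (hpos : ∀ x ∈ s, ∀ v ≠ 0, 0 < f'' x v v) :
    StrictConvexOn ℝ s f := by
  refine ⟨hs, fun x hx y hy hxy a b ha hb hab => ?_⟩
  set γ := AffineMap.lineMap (k := ℝ) x y
  have hγs : ∀ t ∈ Set.Icc (0 : ℝ) 1, γ t ∈ s := fun t ht => hs.lineMap_mem hx hy ht
  have hd1 : ∀ t ∈ Set.Icc (0 : ℝ) 1, HasDerivAt (f ∘ γ) (f' (γ t) (y - x)) t := fun t ht =>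
    (hf _ (hγs t ht)).comp_hasDerivAt t AffineMap.hasDerivAt_lineMap
  have hd2 : ∀ t ∈ Set.Icc (0 : ℝ) 1,
      HasDerivAt (fun t => f' (γ t) (y - x)) (f'' (γ t) (y - x) (y - x)) t := fun t ht => by
    simpa using ((hf' _ (hγs t ht)).comp_hasDerivAt t AffineMap.hasDerivAt_lineMap).clm_apply
      (hasDerivAt_const t (y - x))
  have hg : StrictConvexOn ℝ (Set.Icc 0 1) (f ∘ γ) := by
    refine strictConvexOn_of_deriv2_pos (convex_Icc 0 1)
      (fun t ht => (hd1 t ht).continuousAt.continuousWithinAt) fun t ht => ?_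
    rw [interior_Icc] at ht
    have hderiv : deriv (f ∘ γ) =ᶠ[𝓝 t] fun t => f' (γ t) (y - x) :=
      eventually_of_mem (Ioo_mem_nhds ht.1 ht.2) fun r hr =>
        (hd1 r (Set.Ioo_subset_Icc_self hr)).deriv
    rw [Function.iterate_succ_apply, Function.iterate_one, hderiv.deriv_eq,
      (hd2 t (Set.Ioo_subset_Icc_self ht)).deriv]
    exact hpos _ (hγs t (Set.Ioo_subset_Icc_self ht)) _ (sub_ne_zero.2 hxy.symm)
  have key := hg.2 (Set.left_mem_Icc.2 zero_le_one) (Set.right_mem_Icc.2 zero_le_one) zero_ne_one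
    ha hb hab
  have hab' : 1 - b = a := by linarith
  simp only [γ, Function.comp_apply, smul_eq_mul, mul_zero, mul_one, zero_add,
    AffineMap.lineMap_apply_module, hab', sub_zero, sub_self, one_smul, zero_smul, add_zero] at key
  exact key

theorem ConvexOn.isMinOn_of_hasFDerivAt_zero (hf : ConvexOn ℝ s f) (hx : x ∈ s)
    (h0 : HasFDerivAt f (0 : E →L[ℝ] ℝ) x) : IsMinOn f s x := by
  intro y hy
  set γ := AffineMap.lineMap (k := ℝ) x y
  have hg : ConvexOn ℝ (Set.Icc 0 1) (f ∘ γ) :=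
    (hf.comp_affineMap γ).subset (fun t ht => hf.1.lineMap_mem hx hy ht) (convex_Icc 0 1)
  have hd : HasDerivAt (f ∘ γ) 0 0 := by
    have h0' : HasFDerivAt f (0 : E →L[ℝ] ℝ) (γ 0) := by rwa [AffineMap.lineMap_apply_zero]
    simpa using h0'.comp_hasDerivAt (0 : ℝ) AffineMap.hasDerivAt_lineMap
  have key := hg.le_slope_of_hasDerivAt (Set.left_mem_Icc.2 zero_le_one)
    (Set.right_mem_Icc.2 zero_le_one) zero_lt_one hd
  simpa [slope, γ] using key

end Convexity

theorem IsCompact.exists_isMinOn_of_sublevel_subset {X β : Type*} [TopologicalSpace X]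
    [LinearOrder β] [TopologicalSpace β] [ClosedIicTopology β] {s K : Set X} {f : X → β}
    (hK : IsCompact K) (hf : ContinuousOn f K) (hKs : K ⊆ s) {x₀ : X} (hx₀ : x₀ ∈ s)
    (hsub : ∀ y ∈ s, f y ≤ f x₀ → y ∈ K) : ∃ z ∈ s, IsMinOn f s z := by
  obtain ⟨z, hz, hmin⟩ := hK.exists_isMinOn ⟨x₀, hsub x₀ hx₀ le_rfl⟩ hf
  refine ⟨z, hKs hz, isMinOn_iff.2 fun y hy => ?_⟩
  by_cases hy' : f y ≤ f x₀
  · exact isMinOn_iff.1 hmin y (hsub y hy hy')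
  · exact (isMinOn_iff.1 hmin x₀ (hsub x₀ hx₀ le_rfl)).trans (not_le.1 hy').le

theorem LinearMap.posDef_toMatrix₂' {ι : Type*} [Fintype ι] [DecidableEq ι]
    {B : (ι → ℝ) →ₗ[ℝ] (ι → ℝ) →ₗ[ℝ] ℝ} (hB : ∀ v w, B v w = B w v)
    (hpos : ∀ v, v ≠ 0 → 0 < B v v) : (LinearMap.toMatrix₂' ℝ B).PosDef := by
  refine .of_dotProduct_mulVec_pos (Matrix.IsHermitian.ext fun i j => ?_) fun v hv => ?_
  · simp [hB]
  · rw [star_trivial, ← Matrix.toLinearMap₂'_apply', Matrix.toLinearMap₂'_toMatrix']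
    exact hpos v hv

section Energy
variable {n c : ℕ} {q u : Fin (c + 1) → ℝ} {x : Fin n → ℝ}

abbrev coord (i : Fin n) : (Fin n → ℝ) →L[ℝ] ℝ := ContinuousLinearMap.proj i

noncomputable def energyDeriv (n c : ℕ) (q u : Fin (c + 1) → ℝ) (x : Fin n → ℝ) :
    (Fin n → ℝ) →L[ℝ] ℝ :=
  (1 / 2 : ℝ) • ∑ i : Fin n, ∑ j ∈ univ \ {i},
      (-((x i - x j) / |x i - x j| ^ 3)) • (coord i - coord j) +
    ∑ i : Fin n, ∑ j : Fin (c + 1), (-(u j * (x i - q j) / |x i - q j| ^ 3)) • coord i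

noncomputable def energyDeriv2 (n c : ℕ) (q u : Fin (c + 1) → ℝ) (x : Fin n → ℝ) :
    (Fin n → ℝ) →L[ℝ] (Fin n → ℝ) →L[ℝ] ℝ :=
  (1 / 2 : ℝ) • ∑ i : Fin n, ∑ j ∈ univ \ {i},
      ((2 / |x i - x j| ^ 3) • (coord i - coord j)).smulRight (coord i - coord j) +
    ∑ i : Fin n, ∑ j : Fin (c + 1), ((2 * u j / |x i - q j| ^ 3) • coord i).smulRight (coord i)

theorem hasFDerivAt_energy (hx : x ∈ goodSet n c q) :
    HasFDerivAt (energy n c q u) (energyDeriv n c q u x) x := by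
  have hcoord (i : Fin n) : HasFDerivAt (fun y : Fin n → ℝ => y i) (coord i) x :=
    hasFDerivAt_apply i x
  have hpair : ∀ i, ∀ j ∈ univ \ {i}, HasFDerivAt (fun y : Fin n → ℝ => 1 / |y i - y j|)
      ((-((x i - x j) / |x i - x j| ^ 3)) • (coord i - coord j)) x := fun i j hj => by
    simpa only [one_mul] using ((hcoord i).fun_sub (hcoord j)).div_abs
      (sub_ne_zero.2 (hx.1 i j (Ne.symm (by simpa using hj)))) 1
  have helec : ∀ i j, HasFDerivAt (fun y : Fin n → ℝ => u j / |y i - q j|)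
      ((-(u j * (x i - q j) / |x i - q j| ^ 3)) • coord i) x :=
    fun i j => ((hcoord i).sub_const (q j)).div_abs (sub_ne_zero.2 (hx.2 i j)) (u j)
  exact ((HasFDerivAt.fun_sum fun i _ => .fun_sum (hpair i)).const_mul _).add
    (.fun_sum fun i _ => .fun_sum fun j _ => helec i j)

theorem hasFDerivAt_energyDeriv (hx : x ∈ goodSet n c q) :
    HasFDerivAt (energyDeriv n c q u) (energyDeriv2 n c q u x) x := by
  have hcoord (i : Fin n) : HasFDerivAt (fun y : Fin n → ℝ => y i) (coord i) x :=
    hasFDerivAt_apply i x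
  have hpair : ∀ i, ∀ j ∈ univ \ {i}, HasFDerivAt
      (fun y : Fin n → ℝ => (-((y i - y j) / |y i - y j| ^ 3)) • (coord i - coord j))
      (((2 / |x i - x j| ^ 3) • (coord i - coord j)).smulRight (coord i - coord j)) x :=
    fun i j hj => by
      simpa only [one_mul, mul_one] using
        (((hcoord i).fun_sub (hcoord j)).neg_mul_div_abs_pow_three
          (sub_ne_zero.2 (hx.1 i j (Ne.symm (by simpa using hj)))) 1).smul_const
          (coord i - coord j)
  have helec : ∀ i j, HasFDerivAt
      (fun y : Fin n → ℝ => (-(u j * (y i - q j) / |y i - q j| ^ 3)) • coord i)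
      (((2 * u j / |x i - q j| ^ 3) • coord i).smulRight (coord i)) x :=
    fun i j => (((hcoord i).sub_const (q j)).neg_mul_div_abs_pow_three
      (sub_ne_zero.2 (hx.2 i j)) (u j)).smul_const (coord i)
  exact ((HasFDerivAt.fun_sum fun i _ => .fun_sum (hpair i)).const_smul (1 / 2 : ℝ)).add
    (.fun_sum fun i _ => .fun_sum fun j _ => helec i j)

theorem energyDeriv2_apply (x v w : Fin n → ℝ) :
    energyDeriv2 n c q u x v w =
      ∑ i : Fin n, ∑ j ∈ univ \ {i}, (v i - v j) * (w i - w j) / |x i - x j| ^ 3 +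
        ∑ i : Fin n, ∑ j : Fin (c + 1), 2 * u j * (v i * w i) / |x i - q j| ^ 3 := by
  simp only [energyDeriv2, add_apply, smul_apply, _root_.sum_apply,
    ContinuousLinearMap.smulRight_apply, sub_apply, ContinuousLinearMap.proj_apply, smul_eq_mul,
    Finset.mul_sum]
  congr 1 <;> refine sum_congr rfl fun i _ => sum_congr rfl fun j _ => ?_ <;> ring

theorem energyDeriv2_comm (x v w : Fin n → ℝ) :
    energyDeriv2 n c q u x v w = energyDeriv2 n c q u x w v := by
  simp only [energyDeriv2_apply]
  congr 1 <;> refine sum_congr rfl fun i _ => sum_congr rfl fun j _ => ?_ <;> ring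

theorem energyDeriv2_self_pos (hu : ∀ j, 0 < u j) (hx : ∀ i j, x i ≠ q j) {v : Fin n → ℝ}
    (hv : v ≠ 0) : 0 < energyDeriv2 n c q u x v v := by
  obtain ⟨i, hi⟩ := Function.ne_iff.1 hv
  have hpair : 0 ≤ ∑ i : Fin n, ∑ j ∈ univ \ {i}, (v i - v j) * (v i - v j) / |x i - x j| ^ 3 :=
    sum_nonneg fun i _ => sum_nonneg fun j _ => div_nonneg (mul_self_nonneg _) (by positivity)
  have helec : 0 < ∑ i : Fin n, ∑ j : Fin (c + 1), 2 * u j * (v i * v i) / |x i - q j| ^ 3 := by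
    refine sum_pos' (fun i _ => sum_nonneg fun j _ => ?_)
      ⟨i, mem_univ i, sum_pos (fun j _ => ?_) univ_nonempty⟩
    · exact div_nonneg (mul_nonneg (mul_pos two_pos (hu j)).le (mul_self_nonneg _))
        (by positivity)
    · exact div_pos (mul_pos (mul_pos two_pos (hu j)) (mul_self_pos.2 hi))
        (pow_pos (abs_pos.2 (sub_ne_zero.2 (hx i j))) 3)
  rw [energyDeriv2_apply]
  linarith

theorem isOpen_goodSet : IsOpen (goodSet n c q) := by
  simp only [goodSet, Set.ofPred_and, Set.ofPred_forall]
  exact .inter (isOpen_iInter_of_finite fun i => isOpen_iInter_of_finite fun j =>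
      isOpen_iInter_of_finite fun _ => isOpen_ne_fun (continuous_apply i) (continuous_apply j))
    (isOpen_iInter_of_finite fun i => isOpen_iInter_of_finite fun j =>
      isOpen_ne_fun (continuous_apply i) continuous_const)

theorem fderiv_fderiv_energy (hx : x ∈ goodSet n c q) :
    fderiv ℝ (fderiv ℝ (energy n c q u)) x = energyDeriv2 n c q u x := by
  have h : fderiv ℝ (energy n c q u) =ᶠ[𝓝 x] energyDeriv n c q u :=
    eventually_of_mem (isOpen_goodSet.mem_nhds hx) fun y hy => (hasFDerivAt_energy hy).fderiv
  exact ((hasFDerivAt_energyDeriv hx).congr_of_eventuallyEq h).fderiv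

theorem hessian_eq_toMatrix₂' (hx : x ∈ goodSet n c q) :
    hessian n c q u x =
      LinearMap.toMatrix₂' ℝ (ContinuousLinearMap.toLinearMap₁₂ (energyDeriv2 n c q u x)) := by
  ext k i
  simp [hessian, iteratedFDeriv_two_apply, fderiv_fderiv_energy hx]

theorem posDef_hessian (hu : ∀ j, 0 < u j) (hx : x ∈ goodSet n c q) :
    (hessian n c q u x).PosDef := by
  rw [hessian_eq_toMatrix₂' hx]
  exact LinearMap.posDef_toMatrix₂' (fun v w => energyDeriv2_comm x v w)
    fun _ hv => energyDeriv2_self_pos hu hx.2 hv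

theorem one_div_abs_le_two_mul_energy (hu : ∀ j, 0 ≤ u j) (y : Fin n → ℝ) {i j : Fin n}
    (hij : i ≠ j) : 1 / |y i - y j| ≤ 2 * energy n c q u y := by
  have hpair : 1 / |y i - y j| ≤ ∑ i : Fin n, ∑ j ∈ univ \ {i}, 1 / |y i - y j| :=
    (single_le_sum (f := fun j => 1 / |y i - y j|) (fun j _ => by positivity)
      (by simpa using hij.symm)).trans
      (single_le_sum (f := fun i => ∑ j ∈ univ \ {i}, 1 / |y i - y j|)
        (fun i _ => sum_nonneg fun j _ => by positivity) (mem_univ i))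
  have helec : 0 ≤ ∑ i : Fin n, ∑ j : Fin (c + 1), u j / |y i - q j| :=
    sum_nonneg fun i _ => sum_nonneg fun j _ => div_nonneg (hu j) (abs_nonneg _)
  rw [energy]
  linarith

theorem div_abs_le_energy (hu : ∀ j, 0 ≤ u j) (y : Fin n → ℝ) (i : Fin n) (j : Fin (c + 1)) :
    u j / |y i - q j| ≤ energy n c q u y := by
  have hpair : 0 ≤ ∑ i : Fin n, ∑ j ∈ univ \ {i}, 1 / |y i - y j| :=
    sum_nonneg fun i _ => sum_nonneg fun j _ => by positivity
  have helec : u j / |y i - q j| ≤ ∑ i : Fin n, ∑ j : Fin (c + 1), u j / |y i - q j| :=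
    (single_le_sum (f := fun j => u j / |y i - q j|) (fun j _ => div_nonneg (hu j) (abs_nonneg _))
      (mem_univ j)).trans
      (single_le_sum (f := fun i => ∑ j : Fin (c + 1), u j / |y i - q j|)
        (fun i _ => sum_nonneg fun j _ => div_nonneg (hu j) (abs_nonneg _)) (mem_univ i))
  rw [energy]
  linarith

end Energy

theorem sum_Iio_add_le_sum_Iio {α : Type*} [LinearOrder α] [LocallyFiniteOrderBot α]
    (f : α → ℕ) {k k' : α} (h : k < k') : ∑ j ∈ Iio k, f j + f k ≤ ∑ j ∈ Iio k', f j := by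
  rw [add_comm, ← sum_insert (f := f) (by simp : k ∉ Iio k)]
  exact sum_le_sum_of_subset fun j hj => by
    simp only [mem_insert, mem_Iio] at hj ⊢
    rcases hj with rfl | hj
    exacts [h, hj.trans h]

section Blocks
variable {n c : ℕ} {ν : Fin c → ℕ}

/-- Particle `m` (counted from `0`) is one of the `ν k` particles that `roa` confines between
`q k.castSucc` and `q k.succ`. -/
def InBlock (ν : Fin c → ℕ) (k : Fin c) (m : Fin n) : Prop :=
  ∑ j ∈ Iio k, ν j ≤ m ∧ (m : ℕ) < ∑ j ∈ Iio k, ν j + ν k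

theorem InBlock.le_of_le {k k' : Fin c} {m m' : Fin n} (h : InBlock ν k m)
    (h' : InBlock ν k' m') (hm : m ≤ m') : k ≤ k' := by
  by_contra! hlt
  have := sum_Iio_add_le_sum_Iio ν hlt
  have : (m : ℕ) ≤ m' := hm
  unfold InBlock at h h'
  omega

theorem exists_inBlock (hν : ∑ k, ν k = n) (m : Fin n) : ∃ k, InBlock ν k m := by
  obtain ⟨⟨k, r⟩, hkr⟩ := finSigmaFinEquiv.surjective (m.cast hν.symm)
  have hsum : ∑ i : Fin k, ν (Fin.castLE k.2.le i) = ∑ j ∈ Iio k, ν j := by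
    have hIio : Iio k = univ.map (Fin.castLEEmb k.2.le) := by
      ext j
      simp only [mem_Iio, Finset.mem_map, mem_univ, true_and, Fin.castLEEmb_apply]
      exact ⟨fun h => ⟨⟨j, h⟩, rfl⟩, by rintro ⟨i, rfl⟩; exact i.2⟩
    rw [hIio, sum_map]
    rfl
  have hm := congrArg Fin.val hkr
  rw [finSigmaFinEquiv_apply, hsum] at hm
  simp only [Fin.val_cast] at hm
  exact ⟨k, by omega, by omega⟩

end Blocks

section Region
variable {n c : ℕ} {q : Fin (c + 1) → ℝ} {ν : Fin c → ℕ}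

theorem mem_roa_iff (hq : Monotone q) (hν : ∑ k, ν k = n) {x : Fin n → ℝ} :
    x ∈ roa n c q ν ↔
      StrictMono x ∧ ∀ k m, InBlock ν k m → q k.castSucc < x m ∧ x m < q k.succ := by
  refine ⟨fun hx => ⟨fun i j h => hx.1.1 i j h, fun k m hkm => hx.2 k m hkm.1 hkm.2⟩,
    fun ⟨hmono, hblock⟩ =>
      ⟨⟨fun i j h => hmono h, fun i => ?_⟩, fun k m h₁ h₂ => hblock k m ⟨h₁, h₂⟩⟩⟩
  obtain ⟨k, hk⟩ := exists_inBlock hν i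
  exact ⟨(hq (Fin.zero_le _)).trans_lt (hblock k i hk).1,
    (hblock k i hk).2.trans_le (hq (Fin.le_last _))⟩

theorem roa_subset_goodSet (hq : StrictMono q) (hν : ∑ k, ν k = n) :
    roa n c q ν ⊆ goodSet n c q := by
  intro x hx
  rw [mem_roa_iff hq.monotone hν] at hx
  refine ⟨fun i j hij => hx.1.injective.ne hij, fun i j => ?_⟩
  obtain ⟨k, hk⟩ := exists_inBlock hν i
  obtain ⟨hlo, hhi⟩ := hx.2 k i hk
  rcases le_or_gt j k.castSucc with hj | hj
  · exact (hlo.trans_le' (hq.monotone hj)).ne'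
  · exact (hhi.trans_le (hq.monotone (Fin.castSucc_lt_iff_succ_le.1 hj))).ne

theorem isOpen_roa : IsOpen (roa n c q ν) := by
  simp only [roa, stateSpace, Set.ofPred_and, Set.ofPred_forall]
  refine ((isOpen_iInter_of_finite fun i => isOpen_iInter_of_finite fun j =>
      isOpen_iInter_of_finite fun _ => ?_).inter
        (isOpen_iInter_of_finite fun i => .inter ?_ ?_)).inter
    (isOpen_iInter_of_finite fun k => isOpen_iInter_of_finite fun m =>
      isOpen_iInter_of_finite fun _ => isOpen_iInter_of_finite fun _ => .inter ?_ ?_) <;>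
  exact isOpen_lt (by fun_prop) (by fun_prop)

theorem convex_roa : Convex ℝ (roa n c q ν) := by
  intro x hx y hy a b ha hb hab
  have combo_lt {s t s' t' : ℝ} (h : s < t) (h' : s' < t') : a * s + b * s' < a * t + b * t' := by
    rcases ha.eq_or_lt with rfl | ha'
    · obtain rfl : b = 1 := by simpa using hab
      simpa using h'
    · nlinarith [mul_le_mul_of_nonneg_left h'.le hb]
  have combo_self (r : ℝ) : a * r + b * r = r := by rw [← add_mul, hab, one_mul]
  simp only [roa, stateSpace, Set.mem_ofPred_eq, Pi.add_apply, Pi.smul_apply, smul_eq_mul]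
    at hx hy ⊢
  refine ⟨⟨fun i j h => combo_lt (hx.1.1 i j h) (hy.1.1 i j h), fun i => ⟨?_, ?_⟩⟩,
    fun k m h₁ h₂ => ⟨?_, ?_⟩⟩
  · simpa only [combo_self] using combo_lt (hx.1.2 i).1 (hy.1.2 i).1
  · simpa only [combo_self] using combo_lt (hx.1.2 i).2 (hy.1.2 i).2
  · simpa only [combo_self] using combo_lt (hx.2 k m h₁ h₂).1 (hy.2 k m h₁ h₂).1
  · simpa only [combo_self] using combo_lt (hx.2 k m h₁ h₂).2 (hy.2 k m h₁ h₂).2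

theorem roa_nonempty (hq : StrictMono q) (hν : ∑ k, ν k = n) : (roa n c q ν).Nonempty := by
  choose K hK using exists_inBlock hν
  -- particle `m` sits at the fraction `(m + 1) / (n + 1)` of the gap of its block
  have hgap (k : Fin c) : q k.castSucc < q k.succ := hq k.castSucc_lt_succ
  set t : Fin n → ℝ := fun m => ((m : ℝ) + 1) / (n + 1)
  have ht (m : Fin n) : 0 < t m ∧ t m < 1 := by
    have : (m : ℝ) + 1 < n + 1 := by exact_mod_cast Nat.succ_lt_succ m.2
    exact ⟨by positivity, (div_lt_one (by positivity)).2 this⟩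
  have ht_mono : StrictMono t := fun m m' h => by
    have : (m : ℝ) < m' := by exact_mod_cast h
    exact div_lt_div_of_pos_right (by linarith) (by positivity)
  set x : Fin n → ℝ := fun m => AffineMap.lineMap (q (K m).castSucc) (q (K m).succ) (t m)
  have hx (m : Fin n) : q (K m).castSucc < x m ∧ x m < q (K m).succ :=
    ⟨(left_lt_lineMap_iff_pos (hgap _)).2 (ht m).1,
      (lineMap_lt_right_iff_lt_one (hgap _)).2 (ht m).2⟩
  refine ⟨x, (mem_roa_iff hq.monotone hν).2 ⟨fun m m' h => ?_, fun k m hm => ?_⟩⟩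
  · rcases ((hK m).le_of_le (hK m') h.le).eq_or_lt with heq | hlt
    · simp only [x, heq]
      exact (lineMap_lt_lineMap_iff_of_lt' (hgap _)).2 (ht_mono h)
    · calc x m < q (K m).succ := (hx m).2
        _ ≤ q (K m').castSucc := hq.monotone (Fin.succ_le_castSucc_iff.2 hlt)
        _ < x m' := (hx m').1
  · obtain rfl : K m = k := le_antisymm ((hK m).le_of_le hm le_rfl) (hm.le_of_le (hK m) le_rfl)
    exact hx m

def separatedSet (q u : Fin (c + 1) → ℝ) (ν : Fin c → ℕ) (B : ℝ) : Set (Fin n → ℝ) :=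
  {y | Monotone y ∧ (∀ k m, InBlock ν k m → q k.castSucc ≤ y m ∧ y m ≤ q k.succ) ∧
    (∀ i j, i ≠ j → 1 ≤ 2 * B * |y i - y j|) ∧ ∀ i j, u j ≤ B * |y i - q j|}

variable {u : Fin (c + 1) → ℝ}

theorem separatedSet_subset_roa (hq : Monotone q) (hu : ∀ j, 0 < u j) (hν : ∑ k, ν k = n)
    (B : ℝ) : separatedSet q u ν B ⊆ roa n c q ν := by
  rintro y ⟨hmono, hblock, hpair, helec⟩
  have hinj : Function.Injective y := fun i j h => by
    by_contra hij
    have := hpair i j hij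
    norm_num [h] at this
  have hne (i : Fin n) (j : Fin (c + 1)) : y i ≠ q j := fun h => by
    simpa [h] using (hu j).trans_le (helec i j)
  exact (mem_roa_iff hq hν).2 ⟨hmono.strictMono_of_injective hinj, fun k m hm =>
    ⟨(hblock k m hm).1.lt_of_ne (hne m _).symm, (hblock k m hm).2.lt_of_ne (hne m _)⟩⟩

theorem isCompact_separatedSet (hq : Monotone q) (hu : ∀ j, 0 < u j) (hν : ∑ k, ν k = n)
    (B : ℝ) : IsCompact (separatedSet (n := n) q u ν B) := by
  have hclosed : IsClosed (separatedSet (n := n) q u ν B) := by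
    simp only [separatedSet, Set.ofPred_and, Set.ofPred_forall]
    refine isClosed_monotone.inter (.inter ?_ (.inter ?_ ?_))
    · exact isClosed_iInter fun k => isClosed_iInter fun m => isClosed_iInter fun _ =>
        .inter (isClosed_le (by fun_prop) (by fun_prop)) (isClosed_le (by fun_prop) (by fun_prop))
    · exact isClosed_iInter fun i => isClosed_iInter fun j => isClosed_iInter fun _ =>
        isClosed_le (by fun_prop) (by fun_prop)
    · exact isClosed_iInter fun i => isClosed_iInter fun j =>
        isClosed_le (by fun_prop) (by fun_prop)
  refine (isCompact_univ_pi fun _ => isCompact_Icc (a := q 0) (b := q (Fin.last c)))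
    |>.of_isClosed_subset hclosed fun y hy i _ => ?_
  have hy := separatedSet_subset_roa hq hu hν B hy
  exact ⟨(hy.1.2 i).1.le, (hy.1.2 i).2.le⟩

theorem mem_separatedSet_of_energy_le (hq : StrictMono q) (hu : ∀ j, 0 < u j)
    (hν : ∑ k, ν k = n) {B : ℝ} {y : Fin n → ℝ} (hy : y ∈ roa n c q ν)
    (hyB : energy n c q u y ≤ B) : y ∈ separatedSet q u ν B := by
  have hgood := roa_subset_goodSet hq hν hy
  rw [mem_roa_iff hq.monotone hν] at hy
  refine ⟨hy.1.monotone, fun k m hm => ⟨(hy.2 k m hm).1.le, (hy.2 k m hm).2.le⟩,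
    fun i j hij => ?_, fun i j => ?_⟩
  · have h := one_div_abs_le_two_mul_energy (q := q) (fun j => (hu j).le) y hij
    rw [div_le_iff₀ (abs_pos.2 (sub_ne_zero.2 (hgood.1 i j hij)))] at h
    nlinarith [abs_nonneg (y i - y j)]
  · have h := div_abs_le_energy (q := q) (fun j => (hu j).le) y i j
    rw [div_le_iff₀ (abs_pos.2 (sub_ne_zero.2 (hgood.2 i j)))] at h
    nlinarith [abs_nonneg (y i - q j)]

theorem exists_isMinOn_energy (hq : StrictMono q) (hu : ∀ j, 0 < u j) (hν : ∑ k, ν k = n) :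
    ∃ z ∈ roa n c q ν, IsMinOn (energy n c q u) (roa n c q ν) z := by
  obtain ⟨x₀, hx₀⟩ := roa_nonempty hq hν
  have hsub := separatedSet_subset_roa hq.monotone hu hν (energy n c q u x₀)
  exact (isCompact_separatedSet hq.monotone hu hν _).exists_isMinOn_of_sublevel_subset
    (fun y hy => (hasFDerivAt_energy (roa_subset_goodSet hq hν (hsub hy))).continuousAt
      |>.continuousWithinAt)
    hsub hx₀ fun y hy hyB => mem_separatedSet_of_energy_le hq hu hν hy hyB

theorem strictConvexOn_energy (hq : StrictMono q) (hu : ∀ j, 0 < u j) (hν : ∑ k, ν k = n) :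
    StrictConvexOn ℝ (roa n c q ν) (energy n c q u) :=
  have hgood := roa_subset_goodSet hq hν
  strictConvexOn_of_hasFDerivAt2_pos convex_roa (fun _ hx => hasFDerivAt_energy (hgood hx))
    (fun _ hx => hasFDerivAt_energyDeriv (hgood hx)) fun _ hx _ hv =>
      energyDeriv2_self_pos hu (hgood hx).2 hv

end Region

theorem stmt0_general (n c : ℕ)
    (q : Fin (c + 1) → ℝ) (hq : StrictMono q)
    (u : Fin (c + 1) → ℝ) (hu : ∀ j, 0 < u j)
    (ν : Fin c → ℕ) (hν : ∑ k, ν k = n) :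
    StrictConvexOn ℝ (roa n c q ν) (energy n c q u) ∧
    (∃! xss : Fin n → ℝ, xss ∈ roa n c q ν ∧ fderiv ℝ (energy n c q u) xss = 0) ∧
    (∀ xss ∈ roa n c q ν, fderiv ℝ (energy n c q u) xss = 0 →
      (hessian n c q u xss).PosDef) := by
  have hgood := roa_subset_goodSet hq hν
  have hconv := strictConvexOn_energy hq hu hν
  obtain ⟨z, hz, hmin⟩ := exists_isMinOn_energy hq hu hν
  refine ⟨hconv, ⟨z, ⟨hz, (hmin.isLocalMin (isOpen_roa.mem_nhds hz)).fderiv_eq_zero⟩, ?_⟩,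
    fun x hx _ => posDef_hessian hu (hgood hx)⟩
  rintro x ⟨hx, hcrit⟩
  have hd : HasFDerivAt (energy n c q u) 0 x :=
    hcrit ▸ (hasFDerivAt_energy (hgood hx)).differentiableAt.hasFDerivAt
  exact hconv.eq_of_isMinOn (hconv.convexOn.isMinOn_of_hasFDerivAt_zero hx hd) hmin hx hz

/-- **Theorem 1.** For a control `u` with all components strictly positive and any `ν` with
`ν₁ + ⋯ + ν_c = n`, the energy `V(·,u)` is strictly convex on the convex set `𝒮(ν)`, the
gradient equation `∇ₓV(x,u) = 0` has exactly one solution `x_ss` in `𝒮(ν)`, and at this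
solution the Hessian of `V(·,u)` is positive definite. -/
theorem stmt0 (n c : ℕ) (hn : 1 ≤ n) (hc : 1 ≤ c)
    (q : Fin (c + 1) → ℝ) (hq : StrictMono q)
    (u : Fin (c + 1) → ℝ) (hu : ∀ j, 0 < u j)
    (ν : Fin c → ℕ) (hν : ∑ k, ν k = n) :
    StrictConvexOn ℝ (roa n c q ν) (energy n c q u) ∧
    (∃! xss : Fin n → ℝ, xss ∈ roa n c q ν ∧ fderiv ℝ (energy n c q u) xss = 0) ∧
    (∀ xss ∈ roa n c q ν, fderiv ℝ (energy n c q u) xss = 0 →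
      (hessian n c q u xss).PosDef) :=
  stmt0_general n c q hq u hu ν hν
end

section
/- Let u = (u_0,…,u_c) have all components strictly positive. Then at every point x ∈ ℝ^n whose coordinates are pairwise distinct and distinct from all q_j, the Hessian matrix H(x,u) of V(·,u) is positive definite; equivalently, every eigenvalue of the Jacobian of the force field f(·,u) = −∇_x V(·,u) at x is strictly negative. -/
open Finset Filter Topology

/-!
Each term of `V` has the form `w / |ℓ x + b|` with `ℓ` linear, `b` constant and `w > 0`: `ℓ x = x_i - x_j`,
`w = 1/2` for a pair of particles, and `ℓ x = x_i`, `b = -q_j`, `w = u_j` for a particle and an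
electrode. Off the hyperplane `ℓ x + b = 0` its Hessian is `(2 w / |ℓ x + b|³) ℓ ⊗ ℓ`, which is
positive semidefinite. Hence `vᵀ H v ≥ 0`, and the electrode terms alone already contribute
`2 u_j v_i² / |x_i - q_j|³ > 0` as soon as `v_i ≠ 0`.
-/

theorem hasDerivAt_abs_inv {t : ℝ} (ht : t ≠ 0) :
    HasDerivAt (fun s => |s|⁻¹) (-t / |t| ^ 3) t := by
  refine ((hasDerivAt_abs ht).inv (abs_ne_zero.2 ht)).congr_deriv ?_
  rcases ht.lt_or_gt with h | h
  · simp only [abs_of_neg h, sign_neg h, SignType.coe_neg, SignType.coe_one]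
    field_simp
  · simp only [abs_of_pos h, sign_pos h, SignType.coe_one]
    field_simp

theorem hasDerivAt_neg_div_abs_pow_three {t : ℝ} (ht : t ≠ 0) :
    HasDerivAt (fun s => -s / |s| ^ 3) (2 / |t| ^ 3) t := by
  refine ((hasDerivAt_id t).neg.div ((hasDerivAt_abs ht).pow 3)
    (pow_ne_zero 3 (abs_ne_zero.2 ht))).congr_deriv ?_
  rcases ht.lt_or_gt with h | h
  · simp only [Pi.pow_apply, Pi.neg_apply, id_eq, abs_of_neg h, sign_neg h, SignType.coe_neg,
      SignType.coe_one]
    field_simp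
    ring
  · simp only [Pi.pow_apply, Pi.neg_apply, id_eq, abs_of_pos h, sign_pos h, SignType.coe_one]
    field_simp
    ring

section Coulomb

variable {E ι : Type*} [NormedAddCommGroup E] [NormedSpace ℝ E]
  (s : Finset ι) (L : ι → E →L[ℝ] ℝ) (b w : ι → ℝ)

noncomputable def coulombSum (z : E) : ℝ := ∑ k ∈ s, w k * |L k z + b k|⁻¹

noncomputable def coulombGrad (z : E) : E →L[ℝ] ℝ :=
  ∑ k ∈ s, (w k * (-(L k z + b k) / |L k z + b k| ^ 3)) • L k

noncomputable def coulombHess (z : E) : E →L[ℝ] E →L[ℝ] ℝ :=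
  ∑ k ∈ s, ((w k * (2 / |L k z + b k| ^ 3)) • L k).smulRight (L k)

variable {s L b w}

theorem hasFDerivAt_coulombSum {z : E} (hz : ∀ k ∈ s, L k z + b k ≠ 0) :
    HasFDerivAt (coulombSum s L b w) (coulombGrad s L b w z) z := by
  refine HasFDerivAt.fun_sum fun k hk => ?_
  have := ((hasDerivAt_abs_inv (hz k hk)).comp_hasFDerivAt z
    ((L k).hasFDerivAt.add_const (b k))).const_mul (w k)
  simpa only [Function.comp_apply, smul_smul] using this

theorem hasFDerivAt_coulombGrad {z : E} (hz : ∀ k ∈ s, L k z + b k ≠ 0) :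
    HasFDerivAt (coulombGrad s L b w) (coulombHess s L b w z) z := by
  refine HasFDerivAt.fun_sum fun k hk => ?_
  have := (((hasDerivAt_neg_div_abs_pow_three (hz k hk)).comp_hasFDerivAt z
    ((L k).hasFDerivAt.add_const (b k))).const_mul (w k)).smul_const (L k)
  simpa only [Function.comp_apply, smul_smul] using this

theorem eventually_coulomb_ne_zero {z : E} (hz : ∀ k ∈ s, L k z + b k ≠ 0) :
    ∀ᶠ y in 𝓝 z, ∀ k ∈ s, L k y + b k ≠ 0 :=
  (eventually_all_finset s).2 fun k hk =>
    ((L k).continuous.add continuous_const).continuousAt.eventually_ne (hz k hk)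

theorem fderiv_fderiv_coulombSum {z : E} (hz : ∀ k ∈ s, L k z + b k ≠ 0) :
    fderiv ℝ (fderiv ℝ (coulombSum s L b w)) z = coulombHess s L b w z := by
  have hgrad : fderiv ℝ (coulombSum s L b w) =ᶠ[𝓝 z] coulombGrad s L b w :=
    (eventually_coulomb_ne_zero hz).mono fun y hy => (hasFDerivAt_coulombSum hy).fderiv
  rw [hgrad.fderiv_eq]
  exact (hasFDerivAt_coulombGrad hz).fderiv

variable (s L b w) in
theorem coulombHess_apply (z v v' : E) :
    coulombHess s L b w z v v' = ∑ k ∈ s, w k * (2 / |L k z + b k| ^ 3) * (L k v * L k v') := by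
  simp [coulombHess, mul_assoc]

variable (s L b w) in
theorem coulombHess_comm (z v v' : E) :
    coulombHess s L b w z v v' = coulombHess s L b w z v' v := by
  simp only [coulombHess_apply, mul_comm (L _ v)]

theorem coulombHess_self_pos {z v : E} (hw : ∀ k ∈ s, 0 ≤ w k) {k₀ : ι} (hk₀ : k₀ ∈ s)
    (hwk₀ : 0 < w k₀) (hz : L k₀ z + b k₀ ≠ 0) (hv : L k₀ v ≠ 0) :
    0 < coulombHess s L b w z v v := by
  rw [coulombHess_apply]
  refine sum_pos' (fun k hk => ?_) ⟨k₀, hk₀, ?_⟩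
  · exact mul_nonneg (mul_nonneg (hw k hk) (by positivity)) (mul_self_nonneg _)
  · have := abs_pos.2 hz
    exact mul_pos (mul_pos hwk₀ (by positivity)) (mul_self_pos.2 hv)

end Coulomb

theorem ContinuousLinearMap.posDef_toBilinForm_toMatrix {ι : Type*} [Fintype ι] [DecidableEq ι]
    (B : (ι → ℝ) →L[ℝ] (ι → ℝ) →L[ℝ] ℝ) (hsymm : ∀ v v', B v v' = B v' v)
    (hpos : ∀ v ≠ 0, 0 < B v v) :
    (B.toBilinForm.toMatrix (Pi.basisFun ℝ ι)).PosDef :=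
  (LinearMap.BilinForm.posDef_toQuadraticMap_iff_matrix _ _
    (LinearMap.BilinForm.isSymm_def.2 hsymm)).1 hpos

theorem hessian_eq_toMatrix (n c : ℕ) (q u : Fin (c + 1) → ℝ) (x : Fin n → ℝ) :
    hessian n c q u x =
      (fderiv ℝ (fderiv ℝ (energy n c q u)) x).toBilinForm.toMatrix (Pi.basisFun ℝ (Fin n)) := by
  ext k i
  simp [hessian, iteratedFDeriv_two_apply]

section Interactions

variable {n c : ℕ}

abbrev Interaction (n c : ℕ) := ((_ : Fin n) × Fin n) ⊕ (Fin n × Fin (c + 1))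

def interactions (n c : ℕ) : Finset (Interaction n c) :=
  (univ.sigma fun i => univ \ {i}).disjSum univ

def interactionForm : Interaction n c → (Fin n → ℝ) →L[ℝ] ℝ
  | .inl ⟨i, j⟩ => .proj i - .proj j
  | .inr (i, _) => .proj i

def interactionOffset (q : Fin (c + 1) → ℝ) : Interaction n c → ℝ
  | .inl _ => 0
  | .inr (_, j) => -q j

noncomputable def interactionCharge (u : Fin (c + 1) → ℝ) : Interaction n c → ℝ
  | .inl _ => 1 / 2
  | .inr (_, j) => u j

theorem energy_eq_coulombSum (q u : Fin (c + 1) → ℝ) :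
    energy n c q u = coulombSum (interactions n c) interactionForm (interactionOffset q)
      (interactionCharge u) := by
  ext z
  simp [energy, coulombSum, interactions, interactionForm, interactionOffset, interactionCharge,
    Finset.sum_disjSum, Finset.sum_sigma, Fintype.sum_prod_type, Finset.mul_sum, div_eq_mul_inv,
    sub_eq_add_neg]

theorem interactionForm_add_offset_ne_zero {q : Fin (c + 1) → ℝ} {x : Fin n → ℝ}
    (hx : x ∈ goodSet n c q) :
    ∀ k ∈ interactions n c, interactionForm k x + interactionOffset q k ≠ 0 := by
  rintro (⟨i, j⟩ | ⟨i, j⟩) hk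
  · simp only [interactions, inl_mem_disjSum, mem_sigma, mem_univ, Finset.mem_sdiff,
      mem_singleton, true_and] at hk
    simpa [interactionForm, interactionOffset, sub_eq_zero] using hx.1 i j (Ne.symm hk)
  · simpa [interactionForm, interactionOffset, ← sub_eq_add_neg, sub_eq_zero] using hx.2 i j

theorem interactionCharge_nonneg {u : Fin (c + 1) → ℝ} (hu : ∀ j, 0 ≤ u j) :
    ∀ k : Interaction n c, 0 ≤ interactionCharge u k
  | .inl _ => by norm_num [interactionCharge]
  | .inr (_, j) => hu j

end Interactions

theorem stmt6_general (n c : ℕ)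
    (q : Fin (c + 1) → ℝ)
    (u : Fin (c + 1) → ℝ) (hu : ∀ j, 0 < u j)
    (x : Fin n → ℝ) (hx : x ∈ goodSet n c q) :
    (hessian n c q u x).PosDef := by
  have hne := interactionForm_add_offset_ne_zero hx
  rw [hessian_eq_toMatrix, energy_eq_coulombSum, fderiv_fderiv_coulombSum hne]
  refine (coulombHess _ _ _ _ x).posDef_toBilinForm_toMatrix (coulombHess_comm _ _ _ _ _)
    fun v hv => ?_
  obtain ⟨i, hi⟩ := Function.ne_iff.1 hv
  have hk : .inr (i, 0) ∈ interactions n c := by simp [interactions]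
  exact coulombHess_self_pos (fun k _ => interactionCharge_nonneg (fun j => (hu j).le) k) hk
    (hu 0) (hne _ hk) hi

/-- For a control `u` with all components strictly positive, the Hessian matrix `H(x,u)` of
`V(·,u)` is positive definite at every point `x` with pairwise distinct coordinates distinct
from all electrode positions. -/
theorem stmt6 (n c : ℕ) (hn : 1 ≤ n) (hc : 1 ≤ c)
    (q : Fin (c + 1) → ℝ) (hq : StrictMono q)
    (u : Fin (c + 1) → ℝ) (hu : ∀ j, 0 < u j)
    (x : Fin n → ℝ) (hx : x ∈ goodSet n c q) :
    (hessian n c q u x).PosDef :=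
  stmt6_general n c q u hu x hx
end

section
/- Let u = (u_0,…,u_c) have all components strictly positive, let x ∈ 𝒮(ν), and fix k ∈ {1,…,n}. With all coordinates of x other than x_k held fixed, the function y ↦ f_k(x_1,…,x_{k−1},y,x_{k+1},…,x_n,u), where f_k = −∂V/∂x_k, is strictly decreasing on the open interval (x_k^L, x_k^U). -/
open Finset Filter Topology

/-- The force on particle `k`: `f_k(x,u) = -∂V/∂x_k(x,u)`, in explicit form. -/
noncomputable def force (n c : ℕ) (q u : Fin (c + 1) → ℝ) (x : Fin n → ℝ) (k : Fin n) : ℝ :=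
  ∑ j ∈ Finset.univ \ {k}, Real.sign (x k - x j) / (x k - x j) ^ 2 +
    ∑ j : Fin (c + 1), u j * Real.sign (x k - q j) / (x k - q j) ^ 2

/-- `k′`: the smallest electrode index `j` with `x m < q j`. -/
noncomputable def kPrime (n c : ℕ) (q : Fin (c + 1) → ℝ) (x : Fin n → ℝ) (m : Fin n) :
    Fin (c + 1) :=
  if h : (Finset.univ.filter fun j : Fin (c + 1) => x m < q j).Nonempty then
    (Finset.univ.filter fun j : Fin (c + 1) => x m < q j).min' h
  else Fin.last c

/-- `x_{m-1}`, with the convention `x_0 = q_0`. -/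
noncomputable def xPrev (n c : ℕ) (q : Fin (c + 1) → ℝ) (x : Fin n → ℝ) (m : Fin n) : ℝ :=
  if h : 0 < (m : ℕ) then x ⟨(m : ℕ) - 1, lt_of_le_of_lt (Nat.sub_le _ _) m.isLt⟩ else q 0

/-- `x_{m+1}`, with the convention `x_{n+1} = q_c`. -/
noncomputable def xNext (n c : ℕ) (q : Fin (c + 1) → ℝ) (x : Fin n → ℝ) (m : Fin n) : ℝ :=
  if h : (m : ℕ) + 1 < n then x ⟨(m : ℕ) + 1, h⟩ else q (Fin.last c)

/-- `x_m^L = max (x_{m-1}, q_{k′-1})`. -/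
noncomputable def xLow (n c : ℕ) (q : Fin (c + 1) → ℝ) (x : Fin n → ℝ) (m : Fin n) : ℝ :=
  max (xPrev n c q x m)
    (q ⟨((kPrime n c q x m : ℕ)) - 1,
      lt_of_le_of_lt (Nat.sub_le _ _) (kPrime n c q x m).isLt⟩)

/-- `x_m^U = min (x_{m+1}, q_{k′})`. -/
noncomputable def xUp (n c : ℕ) (q : Fin (c + 1) → ℝ) (x : Fin n → ℝ) (m : Fin n) : ℝ :=
  min (xNext n c q x m) (q (kPrime n c q x m))

/-! Each summand of `f_k`, viewed as a function of `y = x_k`, is the field `sign (y - a) / (y - a)²`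
of a unit charge at `a`, scaled by a positive charge for the electrodes. Every other particle and
every electrode lies outside `(x_k^L, x_k^U)`, so on that interval each summand is strictly
decreasing; the electrode sum is nonempty, hence so is the whole force. -/

open Function

lemma strictAntiOn_sign_sub_div_sq {a lo hi : ℝ} (ha : a ≤ lo ∨ hi ≤ a) :
    StrictAntiOn (fun y => Real.sign (y - a) / (y - a) ^ 2) (Set.Ioo lo hi) := by
  intro s hs t ht hst
  rcases ha with ha | ha
  · have hs' : 0 < s - a := by linarith [hs.1]
    have ht' : 0 < t - a := by linarith
    simp only [Real.sign_of_pos hs', Real.sign_of_pos ht']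
    rw [div_lt_div_iff₀ (by positivity) (by positivity)]
    nlinarith
  · have ht' : t - a < 0 := by linarith [ht.2]
    have hs' : s - a < 0 := by linarith
    simp only [Real.sign_of_neg hs', Real.sign_of_neg ht']
    rw [div_lt_div_iff₀ (sq_pos_of_neg ht') (sq_pos_of_neg hs')]
    nlinarith

section Interval

variable {n c : ℕ} {q : Fin (c + 1) → ℝ} {x : Fin n → ℝ} {m : Fin n}

lemma strictMono_of_mem_stateSpace (hx : x ∈ stateSpace n c q) : StrictMono x :=
  fun i j h => hx.1 i j h

lemma le_xPrev_of_lt (hx : Monotone x) {j : Fin n} (hjm : j < m) : x j ≤ xPrev n c q x m := by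
  rw [xPrev, dif_pos (by omega)]
  exact hx (Fin.le_def.2 (by simp; omega))

lemma xNext_le_of_lt (hx : Monotone x) {j : Fin n} (hmj : m < j) : xNext n c q x m ≤ x j := by
  rw [xNext, dif_pos (by omega)]
  exact hx (Fin.le_def.2 (by simp; omega))

lemma kPrime_le_of_lt {j : Fin (c + 1)} (h : x m < q j) : kPrime n c q x m ≤ j := by
  have hj : j ∈ univ.filter fun i => x m < q i := by simp [h]
  rw [kPrime, dif_pos ⟨j, hj⟩]
  exact min'_le _ _ hj

lemma lt_q_kPrime (h : x m < q (Fin.last c)) : x m < q (kPrime n c q x m) := by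
  have hne : (univ.filter fun i => x m < q i).Nonempty := ⟨Fin.last c, by simp [h]⟩
  rw [kPrime, dif_pos hne]
  exact (mem_filter.1 (min'_mem _ hne)).2

lemma q_le_xLow_of_lt_kPrime (hq : Monotone q) {j : Fin (c + 1)} (hj : j < kPrime n c q x m) :
    q j ≤ xLow n c q x m :=
  (hq (Fin.le_def.2 (by simp; omega))).trans (le_max_right _ _)

lemma q_le_xLow_or_xUp_le_q (hq : Monotone q) (hm : x m < q (Fin.last c)) (j : Fin (c + 1)) :
    q j ≤ xLow n c q x m ∨ xUp n c q x m ≤ q j := by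
  by_cases hj : x m < q j
  · exact .inr ((min_le_right _ _).trans (hq (kPrime_le_of_lt hj)))
  · refine .inl (q_le_xLow_of_lt_kPrime hq ?_)
    by_contra! hKj
    exact hj ((lt_q_kPrime hm).trans_le (hq hKj))

lemma x_le_xLow_or_xUp_le_x (hx : Monotone x) {j : Fin n} (hjm : j ≠ m) :
    x j ≤ xLow n c q x m ∨ xUp n c q x m ≤ x j := by
  rcases hjm.lt_or_gt with h | h
  · exact .inl ((le_xPrev_of_lt hx h).trans (le_max_left _ _))
  · exact .inr ((min_le_left _ _).trans (xNext_le_of_lt hx h))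

end Interval

lemma force_update_self (n c : ℕ) (q u : Fin (c + 1) → ℝ) (x : Fin n → ℝ) (k : Fin n) (y : ℝ) :
    force n c q u (update x k y) k =
      ∑ j ∈ univ \ {k}, Real.sign (y - x j) / (y - x j) ^ 2 +
        ∑ j, u j * (Real.sign (y - q j) / (y - q j) ^ 2) := by
  simp only [force, update_self, mul_div_assoc]
  congr 1
  refine sum_congr rfl fun j hj => ?_
  rw [update_of_ne (by simpa using hj)]

theorem stmt8_general (n c : ℕ)
    (q : Fin (c + 1) → ℝ) (hq : StrictMono q)
    (u : Fin (c + 1) → ℝ) (hu : ∀ j, 0 < u j)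
    (ν : Fin c → ℕ)
    (x : Fin n → ℝ) (hx : x ∈ roa n c q ν) (k : Fin n) :
    StrictAntiOn (fun y : ℝ => force n c q u (Function.update x k y) k)
      (Set.Ioo (xLow n c q x k) (xUp n c q x k)) := by
  intro y₁ h₁ y₂ h₂ h12
  have hxmono := (strictMono_of_mem_stateSpace hx.1).monotone
  simp only [force_update_self]
  refine add_lt_add_of_le_of_lt (sum_le_sum fun j hj => ?_)
    (sum_lt_sum_of_nonempty univ_nonempty fun j _ => ?_)
  · have hjk : j ≠ k := by simpa using hj
    exact (strictAntiOn_sign_sub_div_sq (x_le_xLow_or_xUp_le_x hxmono hjk) h₁ h₂ h12).le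
  · exact mul_lt_mul_of_pos_left
      (strictAntiOn_sign_sub_div_sq (q_le_xLow_or_xUp_le_q hq.monotone (hx.1.2 k).2 j) h₁ h₂ h12)
      (hu j)

/-- For `x ∈ 𝒮(ν)` and a fixed particle `k`, the map
`y ↦ f_k(x₁,…,x_{k−1},y,x_{k+1},…,xₙ,u)` is strictly decreasing on `(x_k^L, x_k^U)`. -/
theorem stmt8 (n c : ℕ) (hn : 1 ≤ n) (hc : 1 ≤ c)
    (q : Fin (c + 1) → ℝ) (hq : StrictMono q)
    (u : Fin (c + 1) → ℝ) (hu : ∀ j, 0 < u j)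
    (ν : Fin c → ℕ) (hν : ∑ k, ν k = n)
    (x : Fin n → ℝ) (hx : x ∈ roa n c q ν) (k : Fin n) :
    StrictAntiOn (fun y : ℝ => force n c q u (Function.update x k y) k)
      (Set.Ioo (xLow n c q x k) (xUp n c q x k)) :=
  stmt8_general n c q hq u hu ν x hx k
end

section
/- Let u = (u_0,…,u_c) have all components strictly positive, let x ∈ 𝒮(ν), and fix k ∈ {1,…,n}. With all coordinates of x other than x_k held fixed, the function y ↦ f_k(x_1,…,x_{k−1},y,x_{k+1},…,x_n,u) tends to +∞ as y → x_k^L from the right and tends to −∞ as y → x_k^U from the left. -/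
open Finset Filter Topology

/-!
Each term of the force is a positive multiple of `sign (y - a) / (y - a) ^ 2`, which tends to
`+∞` as `y ↓ a`, to `-∞` as `y ↑ a`, and is continuous elsewhere. Grouping the terms whose
charge sits exactly at the limit point, the force is a positive multiple of one such function
plus a function continuous there. Both `x_k^L` and `x_k^U` are positions of charges acting on
particle `k` (a neighbouring particle or an electrode), which gives the two limits.
-/

/-- The field `sign (y - a) / (y - a) ^ 2` of a unit charge at `a`, written so that its
continuity away from `a` is evident. -/
noncomputable def coulombForce (a y : ℝ) : ℝ := ((y - a) * |y - a|)⁻¹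

lemma sign_div_sq_eq_inv_mul_abs (z : ℝ) : Real.sign z / z ^ 2 = (z * |z|)⁻¹ := by
  rcases lt_trichotomy z 0 with h | rfl | h
  · rw [Real.sign_of_neg h, abs_of_neg h, mul_neg, ← sq, inv_neg, neg_div, one_div]
  · simp
  · rw [Real.sign_of_pos h, abs_of_pos h, ← sq, one_div]

lemma continuousAt_coulombForce {a y : ℝ} (h : y ≠ a) : ContinuousAt (coulombForce a) y := by
  have hy : y - a ≠ 0 := sub_ne_zero.mpr h
  exact ((continuousAt_id.sub continuousAt_const).mul
    (continuousAt_id.sub continuousAt_const).abs).inv₀ (mul_ne_zero hy (abs_ne_zero.mpr hy))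

lemma tendsto_mul_abs_sub_nhds_zero (a : ℝ) :
    Tendsto (fun y : ℝ => (y - a) * |y - a|) (𝓝 a) (𝓝 0) := by
  have hcont : Continuous fun y : ℝ => (y - a) * |y - a| := by fun_prop
  simpa using hcont.tendsto a

lemma tendsto_coulombForce_nhdsGT (a : ℝ) : Tendsto (coulombForce a) (𝓝[>] a) atTop := by
  refine Tendsto.inv_tendsto_nhdsGT_zero (tendsto_nhdsWithin_iff.mpr
    ⟨(tendsto_mul_abs_sub_nhds_zero a).mono_left nhdsWithin_le_nhds, ?_⟩)
  filter_upwards [self_mem_nhdsWithin] with y hy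
  have hpos : 0 < y - a := sub_pos.mpr hy
  exact mul_pos hpos (abs_pos.mpr hpos.ne')

lemma tendsto_coulombForce_nhdsLT (a : ℝ) : Tendsto (coulombForce a) (𝓝[<] a) atBot := by
  refine Tendsto.inv_tendsto_nhdsLT_zero (tendsto_nhdsWithin_iff.mpr
    ⟨(tendsto_mul_abs_sub_nhds_zero a).mono_left nhdsWithin_le_nhds, ?_⟩)
  filter_upwards [self_mem_nhdsWithin] with y hy
  have hneg : y - a < 0 := sub_neg.mpr hy
  exact mul_neg_of_neg_of_pos hneg (abs_pos.mpr hneg.ne)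

section WeightedSum

variable {ι : Type*} (s : Finset ι) (w a : ι → ℝ)

lemma continuousAt_sum_coulombForce {L : ℝ} (h : ∀ j ∈ s, a j ≠ L) :
    ContinuousAt (fun y => ∑ j ∈ s, w j * coulombForce (a j) y) L :=
  tendsto_finsetSum s fun j hj => continuousAt_const.mul (continuousAt_coulombForce (h j hj).symm)

lemma sum_coulombForce_eq_add (L y : ℝ) :
    ∑ j ∈ s, w j * coulombForce (a j) y =
      (∑ j ∈ s with a j = L, w j) * coulombForce L y +
        ∑ j ∈ s with a j ≠ L, w j * coulombForce (a j) y := by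
  rw [← sum_filter_add_sum_filter_not s (fun j => a j = L), sum_mul]
  congr 1
  exact sum_congr rfl fun j hj => by rw [(mem_filter.mp hj).2]

lemma sum_filter_eq_pos (hw : ∀ j ∈ s, 0 < w j) {L : ℝ} (hL : ∃ j ∈ s, a j = L) :
    0 < ∑ j ∈ s with a j = L, w j := by
  obtain ⟨j, hj, rfl⟩ := hL
  exact sum_pos (fun i hi => hw i (mem_filter.mp hi).1) ⟨j, mem_filter.mpr ⟨hj, rfl⟩⟩

lemma tendsto_sum_coulombForce_nhdsGT (hw : ∀ j ∈ s, 0 < w j) {L : ℝ}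
    (hL : ∃ j ∈ s, a j = L) :
    Tendsto (fun y => ∑ j ∈ s, w j * coulombForce (a j) y) (𝓝[>] L) atTop := by
  have hsing := (tendsto_coulombForce_nhdsGT L).const_mul_atTop (sum_filter_eq_pos s w a hw hL)
  have hreg := continuousAt_sum_coulombForce {j ∈ s | a j ≠ L} w a fun j hj =>
    (mem_filter.mp hj).2
  simp only [sum_coulombForce_eq_add s w a L]
  exact hsing.atTop_add (hreg.tendsto.mono_left nhdsWithin_le_nhds)

lemma tendsto_sum_coulombForce_nhdsLT (hw : ∀ j ∈ s, 0 < w j) {L : ℝ}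
    (hL : ∃ j ∈ s, a j = L) :
    Tendsto (fun y => ∑ j ∈ s, w j * coulombForce (a j) y) (𝓝[<] L) atBot := by
  have hsing := (tendsto_coulombForce_nhdsLT L).const_mul_atBot (sum_filter_eq_pos s w a hw hL)
  have hreg := continuousAt_sum_coulombForce {j ∈ s | a j ≠ L} w a fun j hj =>
    (mem_filter.mp hj).2
  simp only [sum_coulombForce_eq_add s w a L]
  exact hsing.atBot_add (hreg.tendsto.mono_left nhdsWithin_le_nhds)

end WeightedSum

section Particles

variable {n c : ℕ} (q u : Fin (c + 1) → ℝ) (x : Fin n → ℝ) (k : Fin n)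

/-- The charges acting on particle `k`: the other particles (`Sum.inl`, unit charge) and the
electrodes (`Sum.inr`, charge `u j`). -/
lemma force_update_eq (y : ℝ) :
    force n c q u (Function.update x k y) k =
      ∑ j ∈ (univ \ {k}).disjSum univ,
        Sum.elim (fun _ => 1) u j * coulombForce (Sum.elim x q j) y := by
  rw [sum_disjSum, force]
  congr 1
  · refine sum_congr rfl fun j hj => ?_
    have hjk : j ≠ k := by simpa using hj
    rw [Function.update_self, Function.update_of_ne hjk, Sum.elim_inl, Sum.elim_inl, one_mul]
    exact sign_div_sq_eq_inv_mul_abs _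
  · refine sum_congr rfl fun j _ => ?_
    rw [Function.update_self, mul_div_assoc, sign_div_sq_eq_inv_mul_abs]
    rfl

lemma exists_charge_eq_xLow :
    ∃ j ∈ (univ \ {k}).disjSum univ, Sum.elim x q j = xLow n c q x k := by
  unfold xLow
  rcases max_choice (xPrev n c q x k) (q ⟨(kPrime n c q x k : ℕ) - 1, _⟩) with h | h <;>
    rw [h]
  · unfold xPrev
    split_ifs with hk
    · exact ⟨Sum.inl _, by simp [Fin.ext_iff]; omega, rfl⟩
    · exact ⟨Sum.inr 0, by simp, rfl⟩
  · exact ⟨Sum.inr _, by simp, rfl⟩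

lemma exists_charge_eq_xUp :
    ∃ j ∈ (univ \ {k}).disjSum univ, Sum.elim x q j = xUp n c q x k := by
  unfold xUp
  rcases min_choice (xNext n c q x k) (q (kPrime n c q x k)) with h | h <;> rw [h]
  · unfold xNext
    split_ifs with hk
    · exact ⟨Sum.inl _, by simp [Fin.ext_iff], rfl⟩
    · exact ⟨Sum.inr _, by simp, rfl⟩
  · exact ⟨Sum.inr _, by simp, rfl⟩

end Particles

theorem stmt9_general (n c : ℕ)
    (q : Fin (c + 1) → ℝ)
    (u : Fin (c + 1) → ℝ) (hu : ∀ j, 0 < u j)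
    (x : Fin n → ℝ) (k : Fin n) :
    Tendsto (fun y : ℝ => force n c q u (Function.update x k y) k)
      (𝓝[>] (xLow n c q x k)) atTop ∧
    Tendsto (fun y : ℝ => force n c q u (Function.update x k y) k)
      (𝓝[<] (xUp n c q x k)) atBot := by
  have hw : ∀ j ∈ (univ \ {k}).disjSum univ, 0 < Sum.elim (fun _ => (1 : ℝ)) u j := by
    rintro (j | j) _
    exacts [one_pos, hu j]
  simp only [force_update_eq]
  exact ⟨tendsto_sum_coulombForce_nhdsGT _ _ _ hw (exists_charge_eq_xLow q x k),
    tendsto_sum_coulombForce_nhdsLT _ _ _ hw (exists_charge_eq_xUp q x k)⟩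

/-- For `x ∈ 𝒮(ν)` and a fixed particle `k`, the map
`y ↦ f_k(x₁,…,x_{k−1},y,x_{k+1},…,xₙ,u)` tends to `+∞` as `y → x_k^L⁺` and to `-∞` as
`y → x_k^U⁻`. -/
theorem stmt9 (n c : ℕ) (hn : 1 ≤ n) (hc : 1 ≤ c)
    (q : Fin (c + 1) → ℝ) (hq : StrictMono q)
    (u : Fin (c + 1) → ℝ) (hu : ∀ j, 0 < u j)
    (ν : Fin c → ℕ) (hν : ∑ k, ν k = n)
    (x : Fin n → ℝ) (hx : x ∈ roa n c q ν) (k : Fin n) :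
    Tendsto (fun y : ℝ => force n c q u (Function.update x k y) k)
      (𝓝[>] (xLow n c q x k)) atTop ∧
    Tendsto (fun y : ℝ => force n c q u (Function.update x k y) k)
      (𝓝[<] (xUp n c q x k)) atBot :=
  stmt9_general n c q u hu x k
end

section
/- Let u = (u_0,…,u_c) have all components strictly positive and let ν ∈ ℕ₀^c satisfy ν_1 + ⋯ + ν_c = n. Then V(·,u) attains a global minimum on 𝒮(ν) at a unique point x_ss ∈ 𝒮(ν); moreover V(x,u) > V(x_ss,u) for every x ∈ 𝒮(ν) with x ≠ x_ss, and ∇_x V(x_ss,u) = 0. -/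
open Finset Filter Topology

/-!
`𝒮(ν)` is the chamber of strictly increasing `x` in which each `x_m` lies in the gap between the
two electrodes that bound its block. There the sign of every `x_i - x_j` and `x_i - q_j` is
fixed, so each term of `V` is the reciprocal of a positive affine function of `x`, hence convex,
and the electrode terms `u_j / |x_m - q_j|` are strictly convex in `x_m`. So `V` is strictly
convex on the open convex chamber: it has at most one minimizer there, and an interior minimizer
is a critical point. For existence, `V` extends to a continuous `ℝ≥0∞`-valued function that is
`⊤` at every collision, in particular on the boundary of the chamber, so its minimum over the
compact closure is attained inside.
-/

open Set
open scoped ENNReal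

section Blocks

variable {c : ℕ} (ν : Fin c → ℕ)

def blockStart (k : Fin c) : ℕ := ∑ j ∈ Finset.Iio k, ν j

lemma blockStart_add_eq_sum_Iic (k : Fin c) :
    blockStart ν k + ν k = ∑ j ∈ Finset.Iic k, ν j := by
  rw [blockStart, ← Finset.Iio_insert, Finset.sum_insert Finset.notMem_Iio_self, add_comm]

lemma blockStart_add_le_blockStart {k k' : Fin c} (h : k < k') :
    blockStart ν k + ν k ≤ blockStart ν k' := by
  rw [blockStart_add_eq_sum_Iic]
  exact Finset.sum_le_sum_of_subset fun j hj =>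
    Finset.mem_Iio.2 ((Finset.mem_Iic.1 hj).trans_lt h)

lemma le_of_mem_block {k k' : Fin c} {m m' : ℕ} (hm : blockStart ν k ≤ m)
    (hm' : m' < blockStart ν k' + ν k') (h : m ≤ m') : k ≤ k' :=
  not_lt.1 fun h' => by have := blockStart_add_le_blockStart ν h'; omega

lemma exists_mem_block {m : ℕ} (hm : m < ∑ k, ν k) :
    ∃ k, blockStart ν k ≤ m ∧ m < blockStart ν k + ν k := by
  obtain ⟨c, rfl⟩ : ∃ c', c = c' + 1 :=
    Nat.exists_eq_add_one.2 (Nat.pos_of_ne_zero fun h => by subst h; simp at hm)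
  set T := Finset.univ.filter fun k => blockStart ν k ≤ m
  have hT : T.Nonempty := ⟨⊥, Finset.mem_filter.2 ⟨Finset.mem_univ _, by simp [blockStart]⟩⟩
  refine ⟨T.max' hT, (Finset.mem_filter.1 (T.max'_mem hT)).2, not_le.1 fun hle => ?_⟩
  set k := T.max' hT
  rw [blockStart_add_eq_sum_Iic] at hle
  by_cases hk : IsMax k
  · rw [hk.eq_top, Finset.Iic_top] at hle
    omega
  · have hsucc : Order.succ k ∈ T := by
      rw [Finset.mem_filter, blockStart, Finset.Iio_succ_eq_Iic_of_not_isMax hk]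
      exact ⟨Finset.mem_univ _, hle⟩
    exact (Order.lt_succ_of_not_isMax hk).not_ge (T.le_max' _ hsucc)

lemma exists_blockIndex {n : ℕ} (hν : ∑ k, ν k = n) :
    ∃ K : Fin n → Fin c, Monotone K ∧
      ∀ (m : Fin n) k, (blockStart ν k ≤ m ∧ (m : ℕ) < blockStart ν k + ν k) ↔ K m = k := by
  choose K hK using fun m : Fin n => exists_mem_block ν (m := m) (hν ▸ m.isLt)
  refine ⟨K, fun m m' h => le_of_mem_block ν (hK m).1 (hK m').2 h,
    fun m k => ⟨fun hk => ?_, ?_⟩⟩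
  · exact le_antisymm (le_of_mem_block ν (hK m).1 hk.2 le_rfl)
      (le_of_mem_block ν hk.1 (hK m).2 le_rfl)
  · rintro rfl
    exact hK m

end Blocks

section Convexity

lemma strictConvexOn_div_abs_sub {w a : ℝ} (hw : 0 < w) {s : Set ℝ} (hs : Convex ℝ s)
    (hside : s ⊆ Ioi a ∨ s ⊆ Iio a) : StrictConvexOn ℝ s fun t => w / |t - a| := by
  refine ⟨hs, fun x hx y hy hxy α β hα hβ hαβ => ?_⟩
  have hsign : (0 < x - a ∧ 0 < y - a) ∨ (x - a < 0 ∧ y - a < 0) := by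
    rcases hside with h | h
    · exact .inl ⟨sub_pos.2 (h hx), sub_pos.2 (h hy)⟩
    · exact .inr ⟨sub_neg.2 (h hx), sub_neg.2 (h hy)⟩
  have hcomb : |α * x + β * y - a| = α * |x - a| + β * |y - a| := by
    rw [show α * x + β * y - a = α * (x - a) + β * (y - a) by linear_combination a * hαβ,
      (abs_add_eq_add_abs_iff _ _).2, abs_mul, abs_mul, abs_of_pos hα, abs_of_pos hβ]
    rcases hsign with h | h
    · exact .inl ⟨by nlinarith, by nlinarith⟩
    · exact .inr ⟨by nlinarith, by nlinarith⟩
  have hX : 0 < |x - a| := by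
    rcases hsign with h | h
    exacts [abs_pos_of_pos h.1, abs_pos_of_neg h.1]
  have hY : 0 < |y - a| := by
    rcases hsign with h | h
    exacts [abs_pos_of_pos h.2, abs_pos_of_neg h.2]
  have hXY : |x - a| ≠ |y - a| := by
    intro h
    apply hxy
    rcases hsign with h' | h'
    · rw [abs_of_pos h'.1, abs_of_pos h'.2] at h; linarith
    · rw [abs_of_neg h'.1, abs_of_neg h'.2] at h; linarith
  simp only [smul_eq_mul, hcomb]
  generalize |x - a| = X at *
  generalize |y - a| = Y at *
  rw [mul_div_assoc', mul_div_assoc', div_add_div _ _ hX.ne' hY.ne',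
    div_lt_div_iff₀ (by positivity) (by positivity)]
  obtain rfl : β = 1 - α := by linarith
  nlinarith [mul_pos (mul_pos hw (mul_pos hα hβ)) (sq_pos_of_ne_zero (sub_ne_zero.2 hXY))]

variable {E : Type*} [AddCommGroup E] [Module ℝ E] {s : Set E}

lemma convexOn_sum {ι : Type*} {t : Finset ι} {f : ι → E → ℝ} (hs : Convex ℝ s)
    (hf : ∀ i ∈ t, ConvexOn ℝ s (f i)) : ConvexOn ℝ s fun x => ∑ i ∈ t, f i x := by
  rw [← Finset.sum_fn]
  exact Finset.sum_induction f (ConvexOn ℝ s) (fun _ _ => ConvexOn.add) (convexOn_const 0 hs) hf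

lemma strictConvexOn_sum {ι : Type*} {t : Finset ι} (ht : t.Nonempty) {f : ι → E → ℝ}
    (hf : ∀ i ∈ t, StrictConvexOn ℝ s (f i)) :
    StrictConvexOn ℝ s fun x => ∑ i ∈ t, f i x := by
  rw [← Finset.sum_fn]
  exact Finset.sum_induction_nonempty f (StrictConvexOn ℝ s) (fun _ _ => StrictConvexOn.add) ht hf

lemma strictConvexOn_sum_apply {ι : Type*} [Fintype ι] {I : ι → Set E} {g : ι → E → ℝ}
    (hg : ∀ i, StrictConvexOn ℝ (I i) (g i)) :
    StrictConvexOn ℝ (univ.pi I) fun x : ι → E => ∑ i, g i (x i) := by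
  refine ⟨convex_pi fun i _ => (hg i).1, fun x hx y hy hxy a b ha hb hab => ?_⟩
  obtain ⟨i₀, hi₀⟩ := Function.ne_iff.1 hxy
  simp only [smul_eq_mul, Finset.mul_sum, ← Finset.sum_add_distrib, Pi.add_apply, Pi.smul_apply]
  exact Finset.sum_lt_sum
    (fun i _ => (hg i).convexOn.2 (hx i trivial) (hy i trivial) ha.le hb.le hab)
    ⟨i₀, Finset.mem_univ _, (hg i₀).2 (hx i₀ trivial) (hy i₀ trivial) hi₀ ha hb hab⟩

lemma convexOn_one_div_abs_comp_affineMap (φ : E →ᵃ[ℝ] ℝ) (hs : Convex ℝ s)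
    (hφ : (∀ x ∈ s, 0 < φ x) ∨ ∀ x ∈ s, φ x < 0) : ConvexOn ℝ s fun x => 1 / |φ x| := by
  obtain ⟨I, hI, hside, hsI⟩ :
      ∃ I : Set ℝ, Convex ℝ I ∧ (I ⊆ Ioi 0 ∨ I ⊆ Iio 0) ∧ s ⊆ φ ⁻¹' I := by
    rcases hφ with h | h
    exacts [⟨_, convex_Ioi 0, .inl subset_rfl, h⟩, ⟨_, convex_Iio 0, .inr subset_rfl, h⟩]
  have h := ((strictConvexOn_div_abs_sub one_pos hI hside).convexOn.comp_affineMap φ).subset hsI hs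
  simp only [Function.comp_def, sub_zero] at h
  exact h

end Convexity

section StrictMono

variable {ι : Type*} [Preorder ι]

lemma setOf_strictMono_eq_iInter {α : Type*} [Preorder α] :
    {x : ι → α | StrictMono x} = ⋂ (i) (j) (_ : i < j), {x | x i < x j} := by
  ext
  simp [StrictMono]

lemma isOpen_setOf_strictMono [Finite ι] : IsOpen {x : ι → ℝ | StrictMono x} := by
  rw [setOf_strictMono_eq_iInter]
  exact isOpen_iInter_of_finite fun i => isOpen_iInter_of_finite fun j =>
    isOpen_iInter_of_finite fun _ => isOpen_lt (continuous_apply i) (continuous_apply j)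

lemma convex_setOf_strictMono : Convex ℝ {x : ι → ℝ | StrictMono x} := by
  rw [setOf_strictMono_eq_iInter]
  refine convex_iInter fun i => convex_iInter fun j => convex_iInter fun _ => ?_
  have hlin : IsLinearMap ℝ fun x : ι → ℝ => x i - x j :=
    ⟨fun x y => by simp only [Pi.add_apply]; ring,
      fun a x => by simp only [Pi.smul_apply, smul_eq_mul]; ring⟩
  simpa only [sub_neg] using convex_halfSpace_lt hlin 0

end StrictMono

section Chamber

variable {n c : ℕ} {q : Fin (c + 1) → ℝ} {K : Fin n → Fin c}

variable (q K) in
def chamber : Set (Fin n → ℝ) :=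
  {x | StrictMono x} ∩ univ.pi fun m => Ioo (q (K m).castSucc) (q (K m).succ)

lemma Ioo_subset_Ioi_or_Iio (hq : Monotone q) (k : Fin c) (j : Fin (c + 1)) :
    Ioo (q k.castSucc) (q k.succ) ⊆ Ioi (q j) ∨ Ioo (q k.castSucc) (q k.succ) ⊆ Iio (q j) := by
  rcases le_or_gt j k.castSucc with h | h
  · exact .inl (Ioo_subset_Ioi_self.trans (Ioi_subset_Ioi (hq h)))
  · exact .inr (Ioo_subset_Iio_self.trans (Iio_subset_Iio (hq (Fin.castSucc_lt_iff_succ_le.1 h))))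

lemma roa_eq_chamber (hq : Monotone q) {ν : Fin c → ℕ}
    (hK : ∀ (m : Fin n) k, (blockStart ν k ≤ m ∧ (m : ℕ) < blockStart ν k + ν k) ↔ K m = k) :
    roa n c q ν = chamber q K := by
  ext x
  refine ⟨fun hx => ⟨hx.1.1, fun m _ => hx.2 (K m) m ((hK m _).2 rfl).1 ((hK m _).2 rfl).2⟩,
    fun hx => ⟨⟨hx.1, fun m => ?_⟩, fun k m h₁ h₂ => ?_⟩⟩
  · exact ⟨(hq (Fin.zero_le _)).trans_lt (hx.2 m trivial).1,
      (hx.2 m trivial).2.trans_le (hq (Fin.le_last _))⟩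
  · obtain rfl := (hK m k).1 ⟨h₁, h₂⟩
    exact hx.2 m trivial

lemma isOpen_chamber : IsOpen (chamber q K) :=
  isOpen_setOf_strictMono.inter (isOpen_set_pi finite_univ fun _ _ => isOpen_Ioo)

lemma convex_chamber : Convex ℝ (chamber q K) :=
  convex_setOf_strictMono.inter (convex_pi fun _ _ => convex_Ioo _ _)

lemma chamber_nonempty (hq : StrictMono q) (hK : Monotone K) : (chamber q K).Nonempty := by
  set t : Fin n → ℝ := fun m => ((m : ℝ) + 1) / (n + 1)
  have ht : ∀ m, t m ∈ Set.Ioo 0 1 := fun m =>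
    ⟨by positivity, (div_lt_one (by positivity)).2 (by simp)⟩
  have ht_mono : StrictMono t := fun m m' h => by
    simp only [t]
    gcongr
    exact_mod_cast h
  set x : Fin n → ℝ := fun m => q (K m).castSucc + t m * (q (K m).succ - q (K m).castSucc)
  have hx : ∀ m, x m ∈ Ioo (q (K m).castSucc) (q (K m).succ) := fun m => by
    have hgap : 0 < q (K m).succ - q (K m).castSucc := sub_pos.2 (hq Fin.castSucc_lt_succ)
    obtain ⟨h0, h1⟩ := ht m
    constructor <;> simp only [x] <;> nlinarith [mul_pos h0 hgap, mul_lt_mul_of_pos_right h1 hgap]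
  refine ⟨x, fun m m' h => ?_, fun m _ => hx m⟩
  rcases (hK h.le).eq_or_lt with hkk | hkk
  · have hgap : 0 < q (K m).succ - q (K m).castSucc := sub_pos.2 (hq Fin.castSucc_lt_succ)
    simp only [x, ← hkk]
    gcongr
    exact ht_mono h
  · calc x m < q (K m).succ := (hx m).2
      _ ≤ q (K m').castSucc := hq.monotone (Fin.succ_le_castSucc_iff.2 hkk)
      _ < x m' := (hx m').1

lemma chamber_subset_goodSet (hq : Monotone q) : chamber q K ⊆ goodSet n c q := fun x hx =>
  ⟨fun _ _ h => hx.1.injective.ne h, fun m j hj => by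
    rcases Ioo_subset_Ioi_or_Iio hq (K m) j with h | h
    · exact (h (hx.2 m trivial)).ne' hj
    · exact (h (hx.2 m trivial)).ne hj⟩

lemma closure_chamber_subset : closure (chamber q K) ⊆
    {x | Monotone x} ∩ univ.pi fun m => Icc (q (K m).castSucc) (q (K m).succ) :=
  closure_minimal (inter_subset_inter (fun _ hx => StrictMono.monotone hx)
      (pi_mono fun _ _ => Ioo_subset_Icc_self))
    (isClosed_monotone.inter (isClosed_set_pi fun _ _ => isClosed_Icc))

lemma isCompact_closure_chamber : IsCompact (closure (chamber q K)) :=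
  (isCompact_univ_pi fun _ => isCompact_Icc).of_isClosed_subset isClosed_closure
    (closure_chamber_subset.trans inter_subset_right)

lemma closure_chamber_inter_goodSet_subset :
    closure (chamber q K) ∩ goodSet n c q ⊆ chamber q K := by
  rintro x ⟨hx, hinj, hne⟩
  obtain ⟨hmono, hbox⟩ := closure_chamber_subset hx
  exact ⟨hmono.strictMono_of_injective fun i j h => not_imp_not.1 (hinj i j) h, fun m _ =>
    ⟨(hbox m trivial).1.lt_of_ne (hne m _).symm, (hbox m trivial).2.lt_of_ne (hne m _)⟩⟩

end Chamber

section Energy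

variable {n c : ℕ} {q u : Fin (c + 1) → ℝ}

lemma strictConvexOn_energy_chamber (hq : Monotone q) (hu : ∀ j, 0 < u j) (K : Fin n → Fin c) :
    StrictConvexOn ℝ (chamber q K) (energy n c q u) := by
  have hconv : Convex ℝ (chamber q K) := convex_chamber
  have hpair : ConvexOn ℝ (chamber q K)
      fun x => (1 / 2 : ℝ) * ∑ i, ∑ j ∈ Finset.univ \ {i}, 1 / |x i - x j| := by
    refine (convexOn_sum hconv fun i _ => convexOn_sum hconv fun j hj => ?_).smul (by norm_num)
    have hji : j ≠ i := by simpa using hj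
    refine convexOn_one_div_abs_comp_affineMap
      (LinearMap.proj (R := ℝ) (φ := fun _ : Fin n => ℝ) i - LinearMap.proj j).toAffineMap hconv ?_
    rcases hji.lt_or_gt with h | h
    · exact .inl fun x hx => sub_pos.2 (hx.1 h)
    · exact .inr fun x hx => sub_neg.2 (hx.1 h)
  have helec : StrictConvexOn ℝ (chamber q K) fun x => ∑ i, ∑ j, u j / |x i - q j| :=
    (strictConvexOn_sum_apply fun m => strictConvexOn_sum Finset.univ_nonempty fun j _ =>
      strictConvexOn_div_abs_sub (hu j) (convex_Ioo _ _) (Ioo_subset_Ioi_or_Iio hq (K m) j)).subset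
      inter_subset_right hconv
  exact hpair.add_strictConvexOn helec

lemma energy_nonneg (hu : ∀ j, 0 ≤ u j) (x : Fin n → ℝ) : 0 ≤ energy n c q u x :=
  add_nonneg (mul_nonneg (by norm_num) (Finset.sum_nonneg fun _ _ => Finset.sum_nonneg
    fun _ _ => by positivity)) (Finset.sum_nonneg fun _ _ => Finset.sum_nonneg
    fun j _ => div_nonneg (hu j) (abs_nonneg _))

variable (n c q u) in
/-- Unlike `energy`, whose divisions by zero give `0`, this is `⊤` wherever two charges collide
or a charge meets an electrode. -/
noncomputable def extEnergy (x : Fin n → ℝ) : ℝ≥0∞ :=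
  ENNReal.ofReal (1 / 2) * ∑ i, ∑ j ∈ Finset.univ \ {i}, ‖x i - x j‖ₑ⁻¹ +
    ∑ i, ∑ j, ENNReal.ofReal (u j) * ‖x i - q j‖ₑ⁻¹

lemma continuous_extEnergy : Continuous (extEnergy n c q u) := by
  unfold extEnergy
  fun_prop (disch := exact ENNReal.ofReal_ne_top)

lemma ENNReal.ofReal_div_abs {w t : ℝ} (hw : 0 ≤ w) (ht : t ≠ 0) :
    ENNReal.ofReal (w / |t|) = ENNReal.ofReal w * ‖t‖ₑ⁻¹ := by
  rw [div_eq_mul_inv, ENNReal.ofReal_mul hw, ENNReal.ofReal_inv_of_pos (abs_pos.2 ht),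
    Real.enorm_eq_ofReal_abs]

lemma extEnergy_eq_ofReal_energy (hu : ∀ j, 0 ≤ u j) {x : Fin n → ℝ} (hx : x ∈ goodSet n c q) :
    extEnergy n c q u x = ENNReal.ofReal (energy n c q u x) := by
  have hpair : ∀ i, ∀ j ∈ Finset.univ \ {i}, 0 ≤ 1 / |x i - x j| := fun _ _ _ => by positivity
  have helec : ∀ i j, 0 ≤ u j / |x i - q j| := fun _ j => div_nonneg (hu j) (abs_nonneg _)
  rw [energy, ENNReal.ofReal_add
      (mul_nonneg (by norm_num) (sum_nonneg fun i _ => sum_nonneg (hpair i)))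
      (sum_nonneg fun i _ => sum_nonneg fun j _ => helec i j), ENNReal.ofReal_mul (by norm_num),
    ENNReal.ofReal_sum_of_nonneg fun i _ => sum_nonneg (hpair i),
    ENNReal.ofReal_sum_of_nonneg fun i _ => sum_nonneg fun j _ => helec i j]
  refine congr_arg₂ (· + ·) (congr_arg _ (sum_congr rfl fun i _ => ?_))
    (sum_congr rfl fun i _ => ?_)
  · rw [ENNReal.ofReal_sum_of_nonneg (hpair i)]
    refine sum_congr rfl fun j hj => ?_
    rw [ENNReal.ofReal_div_abs zero_le_one (sub_ne_zero.2 (hx.1 i j (by simpa [eq_comm] using hj))),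
      ENNReal.ofReal_one, one_mul]
  · rw [ENNReal.ofReal_sum_of_nonneg fun j _ => helec i j]
    exact sum_congr rfl fun j _ => (ENNReal.ofReal_div_abs (hu j) (sub_ne_zero.2 (hx.2 i j))).symm

lemma mem_goodSet_of_extEnergy_ne_top (hu : ∀ j, 0 < u j) {x : Fin n → ℝ}
    (hx : extEnergy n c q u x ≠ ⊤) : x ∈ goodSet n c q := by
  refine ⟨fun i j hij hxij => hx ?_, fun m j hmj => hx ?_⟩
  · refine ENNReal.add_eq_top.2 (.inl (ENNReal.mul_eq_top.2 (.inl ⟨by norm_num,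
      ENNReal.sum_eq_top.2 ⟨i, Finset.mem_univ _, ENNReal.sum_eq_top.2 ⟨j, ?_, ?_⟩⟩⟩)))
    · simpa using hij.symm
    · rw [hxij, sub_self, enorm_zero, ENNReal.inv_zero]
  · refine ENNReal.add_eq_top.2 (.inr (ENNReal.sum_eq_top.2 ⟨m, Finset.mem_univ _,
      ENNReal.sum_eq_top.2 ⟨j, Finset.mem_univ _, ?_⟩⟩))
    rw [hmj, sub_self, enorm_zero, ENNReal.inv_zero, ENNReal.mul_top (by simpa using hu j)]

lemma exists_isMinOn_energy_chamber (hq : StrictMono q) (hu : ∀ j, 0 < u j) {K : Fin n → Fin c}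
    (hK : Monotone K) : ∃ z ∈ chamber q K, IsMinOn (energy n c q u) (chamber q K) z := by
  have hext : ∀ x ∈ chamber q K, extEnergy n c q u x = ENNReal.ofReal (energy n c q u x) :=
    fun x hx =>
      extEnergy_eq_ofReal_energy (fun j => (hu j).le) (chamber_subset_goodSet hq.monotone hx)
  obtain ⟨x₀, hx₀⟩ := chamber_nonempty hq hK
  obtain ⟨z, hz, hmin⟩ := isCompact_closure_chamber.exists_isMinOn ⟨x₀, subset_closure hx₀⟩
    continuous_extEnergy.continuousOn
  have hz_fin : extEnergy n c q u z ≠ ⊤ :=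
    ne_top_of_le_ne_top (hext x₀ hx₀ ▸ ENNReal.ofReal_ne_top) (hmin (subset_closure hx₀))
  have hz_mem :=
    closure_chamber_inter_goodSet_subset ⟨hz, mem_goodSet_of_extEnergy_ne_top hu hz_fin⟩
  refine ⟨z, hz_mem, fun x hx => ?_⟩
  have h := isMinOn_iff.1 hmin x (subset_closure hx)
  rw [hext z hz_mem, hext x hx] at h
  exact (ENNReal.ofReal_le_ofReal_iff (energy_nonneg (fun j => (hu j).le) x)).1 h

end Energy

theorem stmt12_general (n c : ℕ)
    (q : Fin (c + 1) → ℝ) (hq : StrictMono q)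
    (u : Fin (c + 1) → ℝ) (hu : ∀ j, 0 < u j)
    (ν : Fin c → ℕ) (hν : ∑ k, ν k = n) :
    ∃! xss : Fin n → ℝ, xss ∈ roa n c q ν ∧
      (∀ x ∈ roa n c q ν, x ≠ xss → energy n c q u xss < energy n c q u x) ∧
      fderiv ℝ (energy n c q u) xss = 0 := by
  obtain ⟨K, hK_mono, hK⟩ := exists_blockIndex ν hν
  rw [roa_eq_chamber hq.monotone hK]
  obtain ⟨z, hz, hmin⟩ := exists_isMinOn_energy_chamber hq hu hK_mono
  have hstrict : ∀ x ∈ chamber q K, x ≠ z → energy n c q u z < energy n c q u x :=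
    fun x hx hxz => (hmin hx).lt_of_ne fun h => hxz <|
      (strictConvexOn_energy_chamber hq.monotone hu K).eq_of_isMinOn
        (fun y hy => h ▸ hmin hy) hmin hx hz
  refine ⟨z, ⟨hz, hstrict, (hmin.isLocalMin (isOpen_chamber.mem_nhds hz)).fderiv_eq_zero⟩, ?_⟩
  rintro y ⟨hy, hy_strict, -⟩
  by_contra hyz
  exact (hy_strict z hz (Ne.symm hyz)).asymm (hstrict y hy hyz)

/-- For a control `u` with all components strictly positive, `V(·,u)` attains a global
minimum on `𝒮(ν)` at a unique point `x_ss`: `V(x,u) > V(x_ss,u)` for all `x ∈ 𝒮(ν)`,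
`x ≠ x_ss`, and `∇ₓV(x_ss,u) = 0`. -/
theorem stmt12 (n c : ℕ) (hn : 1 ≤ n) (hc : 1 ≤ c)
    (q : Fin (c + 1) → ℝ) (hq : StrictMono q)
    (u : Fin (c + 1) → ℝ) (hu : ∀ j, 0 < u j)
    (ν : Fin c → ℕ) (hν : ∑ k, ν k = n) :
    ∃! xss : Fin n → ℝ, xss ∈ roa n c q ν ∧
      (∀ x ∈ roa n c q ν, x ≠ xss → energy n c q u xss < energy n c q u x) ∧
      fderiv ℝ (energy n c q u) xss = 0 :=
  stmt12_general n c q hq u hu ν hν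
end
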